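/- Let P ∈ ℝ^{n×n} be symmetric positive semidefinite. Then for every e ∈ ℝ^n and every v ∈ ℝ^m with ‖v‖_∞ ≤ 1, f(e, v)^⊤ P f(e, v) ≤ max over all subsets 𝒥 ⊆ {1, …, m} of e^⊤ A_K(𝒥)^⊤ P A_K(𝒥) e. -/

import Mathlib

/-!
Since `sat` is nondecreasing, `1`-Lipschitz and fixes every `v` with `|v| ≤ 1`, each component
`φ_j(K e + v) - v_j` equals `θ_j (K e)_j` for some `θ_j ∈ [0, 1]`. Hence
`f(e, v) = A e + ∑_j θ_j (K_j e) B_(j)` is the image of a point of the cube `[0, 1]^m` under an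
affine map sending the vertex `1_𝒥` to `A_K(𝒥) e`. The quadratic form `x ↦ xᵀ P x` is convex, so
by the maximum principle on the convex hull of the vertices its value at `f(e, v)` is bounded by
its value at some `A_K(𝒥) e`.
-/

open Matrix

/-- The scalar saturation function `sat(x) = sign(x) · min(|x|, 1)`
(saturation bounds normalized to 1). -/
noncomputable def sat (x : ℝ) : ℝ := Real.sign x * min |x| 1

/-- The componentwise saturation function `φ : ℝ^m → ℝ^m`. -/
noncomputable def satVec {m : ℕ} (u : Fin m → ℝ) : Fin m → ℝ := fun j => sat (u j)

/-- The saturated error dynamics `f(e, v) = A e + B (φ(K e + v) − v)`. -/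
noncomputable def errDyn {n m : ℕ} (A : Matrix (Fin n) (Fin n) ℝ)
    (B : Matrix (Fin n) (Fin m) ℝ) (K : Matrix (Fin m) (Fin n) ℝ)
    (e : Fin n → ℝ) (v : Fin m → ℝ) : Fin n → ℝ :=
  A.mulVec e + B.mulVec (satVec (K.mulVec e + v) - v)

/-- `A_K(𝒥) = A + Σ_{j ∈ 𝒥} B_{(j)} K_j`. -/
noncomputable def AK {n m : ℕ} (A : Matrix (Fin n) (Fin n) ℝ)
    (B : Matrix (Fin n) (Fin m) ℝ) (K : Matrix (Fin m) (Fin n) ℝ)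
    (J : Finset (Fin m)) : Matrix (Fin n) (Fin n) ℝ :=
  A + ∑ j ∈ J, Matrix.vecMulVec (fun i => B i j) (K j)

open Set

theorem sat_eq_max_min (x : ℝ) : sat x = max (-1) (min x 1) := by
  rcases lt_trichotomy x 0 with hx | rfl | hx
  · rw [sat, Real.sign_of_neg hx, abs_of_neg hx]
    rcases le_or_gt (-1) x with h1 | h1
    · rw [min_eq_left (by linarith), min_eq_left (by linarith), max_eq_right h1]; ring
    · rw [min_eq_right (by linarith), min_eq_left (by linarith), max_eq_left (by linarith)]; ring
  · simp [sat]
  · rw [sat, Real.sign_of_pos hx, abs_of_pos hx, one_mul, max_eq_right]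
    exact le_min (by linarith) (by norm_num)

theorem monotone_sat : Monotone sat := fun x y hxy => by
  simp only [sat_eq_max_min]
  exact max_le_max le_rfl (min_le_min_right 1 hxy)

theorem lipschitzWith_sat : LipschitzWith 1 sat := by
  rw [show sat = fun x => max (-1) (min x 1) from funext sat_eq_max_min]
  exact (LipschitzWith.id.min_const 1).const_max (-1)

theorem sat_of_abs_le {x : ℝ} (hx : |x| ≤ 1) : sat x = x := by
  obtain ⟨h1, h2⟩ := abs_le.mp hx
  rw [sat_eq_max_min, min_eq_left h2, max_eq_right h1]

theorem Monotone.exists_mem_Icc_sub_eq_mul {g : ℝ → ℝ} (hmono : Monotone g)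
    (hlip : LipschitzWith 1 g) (x u : ℝ) : ∃ θ ∈ Icc (0 : ℝ) 1, g (x + u) - g x = θ * u := by
  rcases eq_or_ne u 0 with rfl | hu
  · exact ⟨0, left_mem_Icc.mpr zero_le_one, by simp⟩
  set d := g (x + u) - g x
  have hd : |d| ≤ |u| := by
    simpa [Real.dist_eq] using hlip.dist_le_mul (x + u) x
  refine ⟨d / u, ⟨?_, ?_⟩, (div_mul_cancel₀ d hu).symm⟩
  · rcases hu.lt_or_gt with hu | hu
    · exact div_nonneg_of_nonpos (sub_nonpos.mpr (hmono (by linarith))) hu.le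
    · exact div_nonneg (sub_nonneg.mpr (hmono (by linarith))) hu.le
  · calc d / u ≤ |d / u| := le_abs_self _
      _ = |d| / |u| := abs_div d u
      _ ≤ 1 := (div_le_one (abs_pos.mpr hu)).mpr hd

theorem exists_mem_Icc_sat_add_sub_eq_mul (u : ℝ) {v : ℝ} (hv : |v| ≤ 1) :
    ∃ θ ∈ Icc (0 : ℝ) 1, sat (u + v) - v = θ * u := by
  simpa only [add_comm u, sat_of_abs_le hv] using
    monotone_sat.exists_mem_Icc_sub_eq_mul lipschitzWith_sat v u

theorem convexOn_dotProduct_mulVec_self {ι : Type*} [Fintype ι] {P : Matrix ι ι ℝ}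
    (hP : ∀ x, 0 ≤ x ⬝ᵥ P *ᵥ x) : ConvexOn ℝ univ fun x => x ⬝ᵥ P *ᵥ x := by
  refine ⟨convex_univ, fun x _ y _ a b ha hb hab => ?_⟩
  -- `a q(x) + b q(y) - q(a x + b y) = a b q(x - y)` when `a + b = 1`
  have hxy := hP (x - y)
  simp only [mulVec_add, mulVec_sub, mulVec_smul, dotProduct_add, dotProduct_sub, add_dotProduct,
    sub_dotProduct, dotProduct_smul, smul_dotProduct, smul_eq_mul] at hxy ⊢
  obtain rfl : b = 1 - a := by linarith
  nlinarith [mul_nonneg ha hb]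

theorem mem_convexHull_range_indicator {ι : Type*} [Fintype ι] {θ : ι → ℝ}
    (hθ : ∀ j, θ j ∈ Icc (0 : ℝ) 1) :
    θ ∈ convexHull ℝ (range fun J : Finset ι => (J : Set ι).indicator 1) := by
  have hcube : θ ∈ convexHull ℝ (univ.pi fun _ => ({0, 1} : Set ℝ)) := by
    rw [convexHull_pi]
    intro j _
    rw [convexHull_pair, segment_eq_Icc zero_le_one]
    exact hθ j
  refine convexHull_mono ?_ hcube
  intro δ hδ
  classical
  refine ⟨Finset.univ.filter fun j => δ j = 1, funext fun j => ?_⟩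
  obtain h | h : δ j = 0 ∨ δ j = 1 := hδ j (mem_univ j)
  all_goals simp [h]

theorem ConvexOn.le_sup'_add_sum {ι E : Type*} [Fintype ι] [AddCommGroup E] [Module ℝ E]
    {f : E → ℝ} (hf : ConvexOn ℝ univ f) (x : E) (w : ι → E) {θ : ι → ℝ}
    (hθ : ∀ j, θ j ∈ Icc (0 : ℝ) 1) :
    f (x + ∑ j, θ j • w j) ≤
      Finset.univ.sup' Finset.univ_nonempty fun J : Finset ι => f (x + ∑ j ∈ J, w j) := by
  have hg := (hf.translate_right x).comp_linearMap (Fintype.linearCombination ℝ w)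
  obtain ⟨_, ⟨J, rfl⟩, hJ⟩ :=
    hg.exists_ge_of_mem_convexHull (subset_univ _) (mem_convexHull_range_indicator hθ)
  refine le_trans ?_ (Finset.le_sup' _ (Finset.mem_univ J))
  classical
  simpa [Fintype.linearCombination_apply, indicator_apply, ite_smul, Finset.sum_ite_mem]
    using hJ

theorem dotProduct_transpose_mul_mul_mulVec {ι κ R : Type*} [Fintype ι] [Fintype κ]
    [CommSemiring R] (M : Matrix ι κ R) (P : Matrix ι ι R) (x : κ → R) :
    x ⬝ᵥ (Mᵀ * P * M) *ᵥ x = M *ᵥ x ⬝ᵥ P *ᵥ (M *ᵥ x) := by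
  rw [← mulVec_mulVec, ← mulVec_mulVec, dotProduct_mulVec, vecMul_transpose]

section Dynamics

variable {n m : ℕ} (A : Matrix (Fin n) (Fin n) ℝ) (B : Matrix (Fin n) (Fin m) ℝ)
  (K : Matrix (Fin m) (Fin n) ℝ) (e : Fin n → ℝ)

theorem AK_mulVec (J : Finset (Fin m)) :
    AK A B K J *ᵥ e = A *ᵥ e + ∑ j ∈ J, (K *ᵥ e) j • Bᵀ j := by
  simp only [AK, add_mulVec, sum_mulVec, vecMulVec_mulVec, op_smul_eq_smul]
  rfl

theorem errDyn_eq_add_sum_smul (v : Fin m → ℝ) {θ : Fin m → ℝ}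
    (hθ : ∀ j, satVec (K *ᵥ e + v) j - v j = θ j * (K *ᵥ e) j) :
    errDyn A B K e v = A *ᵥ e + ∑ j, θ j • (K *ᵥ e) j • Bᵀ j := by
  rw [errDyn, mulVec_eq_sum (satVec _ - v)]
  congr 1
  refine Finset.sum_congr rfl fun j _ => ?_
  rw [op_smul_eq_smul, Pi.sub_apply, hθ j, mul_smul]

end Dynamics

/-- For `P ⪰ 0` symmetric, every `e` and every `v` with `‖v‖_∞ ≤ 1`,
`f(e,v)ᵀ P f(e,v) ≤ max_{𝒥 ⊆ {1,…,m}} eᵀ A_K(𝒥)ᵀ P A_K(𝒥) e`. -/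
theorem stmt2 {n m : ℕ} (A : Matrix (Fin n) (Fin n) ℝ) (B : Matrix (Fin n) (Fin m) ℝ)
    (K : Matrix (Fin m) (Fin n) ℝ) (P : Matrix (Fin n) (Fin n) ℝ) (hP : P.PosSemidef)
    (e : Fin n → ℝ) (v : Fin m → ℝ) (hv : ∀ j, |v j| ≤ 1) :
    errDyn A B K e v ⬝ᵥ P.mulVec (errDyn A B K e v) ≤
      Finset.univ.sup' Finset.univ_nonempty
        (fun J : Finset (Fin m) => e ⬝ᵥ ((AK A B K J)ᵀ * P * AK A B K J).mulVec e) := by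
  obtain ⟨θ, hθ, hsat⟩ : ∃ θ : Fin m → ℝ, (∀ j, θ j ∈ Icc (0 : ℝ) 1) ∧
      ∀ j, satVec (K *ᵥ e + v) j - v j = θ j * (K *ᵥ e) j := by
    choose θ hθ hsat using fun j => exists_mem_Icc_sat_add_sub_eq_mul ((K *ᵥ e) j) (hv j)
    exact ⟨θ, hθ, hsat⟩
  have hconvex : ConvexOn ℝ univ fun x : Fin n → ℝ => x ⬝ᵥ P *ᵥ x :=
    convexOn_dotProduct_mulVec_self fun x => by simpa using hP.dotProduct_mulVec_nonneg x
  simp_rw [errDyn_eq_add_sum_smul A B K e v hsat, dotProduct_transpose_mul_mul_mulVec, AK_mulVec]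
  exact hconvex.le_sup'_add_sum (A *ᵥ e) (fun j => (K *ᵥ e) j • Bᵀ j) hθ
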